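/- arXiv:1904.01005 — 7 statements merged into one kernel-verified Lean document; each statement's English description precedes it below -/
import Mathlib

section
/- The trilinear bracket [·,·,·] on A satisfies the Fundamental Identity of Filippov: for all x1, x2, x3, y2, y3 ∈ A, [[x1,x2,x3], y2, y3] = [[x1,y2,y3], x2, x3] + [x1, [x2,y2,y3], x3] + [x1, x2, [x3,y2,y3]]. Hence (A, [·,·,·]) is a 3-Lie algebra. -/
noncomputable section

/-- The half-integers `½ℤ = {k/2 : k ∈ ℤ}` as an additive subgroup of `ℚ`. -/
def HalfInt : AddSubgroup ℚ where
  carrier := {q | ∃ k : ℤ, q = k / 2}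
  add_mem' := by rintro a b ⟨k, rfl⟩ ⟨j, rfl⟩; exact ⟨k + j, by push_cast; ring⟩
  zero_mem' := ⟨0, by norm_num⟩
  neg_mem' := by rintro a ⟨k, rfl⟩; exact ⟨-k, by push_cast; ring⟩

/-- The half-integer `k/2`. -/
def hh (k : ℤ) : HalfInt := ⟨(k : ℚ) / 2, ⟨k, rfl⟩⟩

variable (F : Type*) [Field F] [CharZero F]

/-- `A` is the group algebra of `(½ℤ)³` over `F`; the basis element indexed by
`(l, m, r)` is `L_{l,m}^r`. -/
abbrev A := AddMonoidAlgebra F (HalfInt × HalfInt × HalfInt)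

/-- The basis element `L_{l,m}^r` of `A`. -/
def L (l m r : HalfInt) : A F := AddMonoidAlgebra.single (l, m, r) 1

/-- `M(α₁,α₂,α₃)`: the determinant of the 3×3 matrix with rows `(r₁,r₂,r₃)`,
`(l₁,l₂,l₃)`, `(m₁,m₂,m₃)`, computed in `ℚ` and mapped into `F`.
Here an index `α = (l, m, r)`. -/
def Mdet (α β γ : HalfInt × HalfInt × HalfInt) : F :=
  ((Matrix.det !![(α.2.2 : ℚ), (β.2.2 : ℚ), (γ.2.2 : ℚ);
                  (α.1 : ℚ),   (β.1 : ℚ),   (γ.1 : ℚ);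
                  (α.2.1 : ℚ), (β.2.1 : ℚ), (γ.2.1 : ℚ)] : ℚ) : F)

/-- The shift `ν = (1, 1, 0)` (in coordinates `(l, m, r)`). -/
def nu : HalfInt × HalfInt × HalfInt := (hh 2, hh 2, hh 0)

/-- The alternating trilinear bracket on `A`, determined on basis elements by
`[L_{l₁,m₁}^{r₁}, L_{l₂,m₂}^{r₂}, L_{l₃,m₃}^{r₃}]
  = M(α₁,α₂,α₃) · L_{l₁+l₂+l₃-1, m₁+m₂+m₃-1}^{r₁+r₂+r₃}`. -/
def bracket (x y z : A F) : A F :=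
  Finsupp.sum x.coeff fun α a => Finsupp.sum y.coeff fun β b => Finsupp.sum z.coeff fun γ c =>
    AddMonoidAlgebra.single (α + β + γ - nu) (a * b * c * Mdet F α β γ)

/-! The identity reduces by trilinearity to basis elements, where it becomes the quadratic identity
`det_mul_det_add_sub` between 3×3 determinants. That identity is Cramer's rule three times over:
`det(u,v,w) • x = det(x,v,w) • u + det(u,x,w) • v + det(u,v,x) • w`, applied to `x = s`, `x = t`
(these terms cancel because `det(s,s,t) = det(t,s,t) = 0`) and to the shift `x = n`. -/

open AddMonoidAlgebra

section WeightedBracket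

variable {R G : Type*} [CommRing R] [AddCommGroup G]

def weightedBracket (c : G → G → G → R) (ν : G) (x y z : R[G]) : R[G] :=
  Finsupp.sum x.coeff fun α a => Finsupp.sum y.coeff fun β b => Finsupp.sum z.coeff fun γ d =>
    single (α + β + γ - ν) (a * b * d * c α β γ)

def IsFilippovWeight (c : G → G → G → R) (ν : G) : Prop :=
  ∀ α β γ δ ε, c α β γ * c (α + β + γ - ν) δ ε
    = c α δ ε * c (α + δ + ε - ν) β γ + c β δ ε * c α (β + δ + ε - ν) γ
      + c γ δ ε * c α β (γ + δ + ε - ν)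

variable {c : G → G → G → R} {ν : G}

@[simp]
lemma weightedBracket_zero_left (y z : R[G]) : weightedBracket c ν 0 y z = 0 := by
  simp [weightedBracket]

@[simp]
lemma weightedBracket_zero_mid (x z : R[G]) : weightedBracket c ν x 0 z = 0 := by
  simp [weightedBracket]

@[simp]
lemma weightedBracket_zero_right (x y : R[G]) : weightedBracket c ν x y 0 = 0 := by
  simp [weightedBracket]

lemma weightedBracket_add_left (x x' y z : R[G]) :
    weightedBracket c ν (x + x') y z = weightedBracket c ν x y z + weightedBracket c ν x' y z := by
  simp [weightedBracket, Finsupp.sum_add_index', add_mul, Finsupp.sum_add]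

lemma weightedBracket_add_mid (x y y' z : R[G]) :
    weightedBracket c ν x (y + y') z = weightedBracket c ν x y z + weightedBracket c ν x y' z := by
  simp [weightedBracket, Finsupp.sum_add_index', add_mul, mul_add, Finsupp.sum_add]

lemma weightedBracket_add_right (x y z z' : R[G]) :
    weightedBracket c ν x y (z + z') = weightedBracket c ν x y z + weightedBracket c ν x y z' := by
  simp [weightedBracket, Finsupp.sum_add_index', add_mul, mul_add, Finsupp.sum_add]

@[simp]
lemma weightedBracket_single (α β γ : G) (a b d : R) :
    weightedBracket c ν (single α a) (single β b) (single γ d)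
      = single (α + β + γ - ν) (a * b * d * c α β γ) := by
  simp [weightedBracket]

lemma IsFilippovWeight.fundamental_identity_single (hc : IsFilippovWeight c ν)
    (α β γ δ ε : G) (a b d e f : R) :
    weightedBracket c ν (weightedBracket c ν (single α a) (single β b) (single γ d))
        (single δ e) (single ε f)
      = weightedBracket c ν (weightedBracket c ν (single α a) (single δ e) (single ε f))
          (single β b) (single γ d)
        + weightedBracket c ν (single α a)
            (weightedBracket c ν (single β b) (single δ e) (single ε f)) (single γ d)
        + weightedBracket c ν (single α a) (single β b)
            (weightedBracket c ν (single γ d) (single δ e) (single ε f)) := by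
  simp only [weightedBracket_single]
  rw [show α + δ + ε - ν + β + γ - ν = α + β + γ - ν + δ + ε - ν by abel,
    show α + (β + δ + ε - ν) + γ - ν = α + β + γ - ν + δ + ε - ν by abel,
    show α + β + (γ + δ + ε - ν) - ν = α + β + γ - ν + δ + ε - ν by abel,
    ← single_add, ← single_add]
  congr 1
  linear_combination a * b * d * e * f * hc α β γ δ ε

lemma IsFilippovWeight.fundamental_identity (hc : IsFilippovWeight c ν) (x1 x2 x3 y2 y3 : R[G]) :
    weightedBracket c ν (weightedBracket c ν x1 x2 x3) y2 y3
      = weightedBracket c ν (weightedBracket c ν x1 y2 y3) x2 x3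
        + weightedBracket c ν x1 (weightedBracket c ν x2 y2 y3) x3
        + weightedBracket c ν x1 x2 (weightedBracket c ν x3 y2 y3) := by
  induction x1 using induction_linear with
  | zero => simp
  | add x x' hx hx' =>
    simp only [weightedBracket_add_left]
    linear_combination hx + hx'
  | single α a =>
  induction x2 using induction_linear with
  | zero => simp
  | add x x' hx hx' =>
    simp only [weightedBracket_add_left, weightedBracket_add_mid]
    linear_combination hx + hx'
  | single β b =>
  induction x3 using induction_linear with
  | zero => simp
  | add x x' hx hx' =>
    simp only [weightedBracket_add_left, weightedBracket_add_right]
    linear_combination hx + hx'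
  | single γ d =>
  induction y2 using induction_linear with
  | zero => simp
  | add x x' hx hx' =>
    simp only [weightedBracket_add_left, weightedBracket_add_mid, weightedBracket_add_right]
    linear_combination hx + hx'
  | single δ e =>
  induction y3 using induction_linear with
  | zero => simp
  | add x x' hx hx' =>
    simp only [weightedBracket_add_left, weightedBracket_add_mid, weightedBracket_add_right]
    linear_combination hx + hx'
  | single ε f => exact hc.fundamental_identity_single α β γ δ ε a b d e f

end WeightedBracket

lemma det_mul_det_add_sub {R : Type*} [CommRing R] (u v w s t n : Fin 3 → R) :
    (Matrix.of ![u, v, w]).det * (Matrix.of ![u + v + w - n, s, t]).det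
      = (Matrix.of ![u, s, t]).det * (Matrix.of ![u + s + t - n, v, w]).det
        + (Matrix.of ![v, s, t]).det * (Matrix.of ![u, v + s + t - n, w]).det
        + (Matrix.of ![w, s, t]).det * (Matrix.of ![u, v, w + s + t - n]).det := by
  simp only [Matrix.det_fin_three, Matrix.of_apply, Matrix.cons_val, Pi.add_apply, Pi.sub_apply]
  ring

def mdetColumn : HalfInt × HalfInt × HalfInt →+ (Fin 3 → ℚ) where
  toFun α := ![α.2.2, α.1, α.2.1]
  map_zero' := by ext i; fin_cases i <;> rfl
  map_add' α β := by ext i; fin_cases i <;> simp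

lemma Mdet_eq_det {K : Type*} [Field K] (α β γ : HalfInt × HalfInt × HalfInt) :
    Mdet K α β γ = ((Matrix.of ![mdetColumn α, mdetColumn β, mdetColumn γ]).det : K) := by
  rw [Mdet, ← Matrix.det_transpose]
  congr 3
  ext i j
  fin_cases i <;> fin_cases j <;> rfl

lemma isFilippovWeight_Mdet (K : Type*) [Field K] [CharZero K] : IsFilippovWeight (Mdet K) nu := by
  intro α β γ δ ε
  simp only [Mdet_eq_det, map_add, map_sub]
  simpa only [Rat.cast_mul, Rat.cast_add] using congrArg (Rat.cast : ℚ → K)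
    (det_mul_det_add_sub (mdetColumn α) (mdetColumn β) (mdetColumn γ) (mdetColumn δ)
      (mdetColumn ε) (mdetColumn nu))

/-- the bracket on `A` satisfies the Fundamental Identity of Filippov,
so `(A, [·,·,·])` is a 3-Lie algebra. -/
theorem fundamental_identity (x1 x2 x3 y2 y3 : A F) :
    bracket F (bracket F x1 x2 x3) y2 y3
      = bracket F (bracket F x1 y2 y3) x2 x3
        + bracket F x1 (bracket F x2 y2 y3) x3
        + bracket F x1 x2 (bracket F x3 y2 y3) :=
  (isFilippovWeight_Mdet F).fundamental_identity x1 x2 x3 y2 y3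
end
end

section
/- The trilinear bracket [·,·,·] on A satisfies the Leibniz rule with respect to the commutative product: for all x1, x2, y2, y3 ∈ A, [x1 · x2, y2, y3] = [x1, y2, y3] · x2 + x1 · [x2, y2, y3]. Together with the Fundamental Identity this makes (A, ·, [·,·,·]) a unital 3-Lie Poisson algebra with unit L_{0,0}^0. -/
/-!
For fixed `y, z` the bracket has the form `x ↦ Σ_α x_α L_α · D α` with
`D α = Σ_{β,γ} y_β z_γ M(α,β,γ) L_{β+γ-ν}`. Since `M` is linear in its first column, `D` is
additive, and on a group algebra any such map is a derivation:
`L_{α+β} D(α+β) = (L_α D α) L_β + L_α (L_β D β)`.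
-/

noncomputable section

variable (F : Type*) [Field F] [CharZero F]

namespace AddMonoidAlgebra

variable {k G : Type*} [CommSemiring k] [AddCommMonoid G]
  (D : G →+ AddMonoidAlgebra k G)

def derivOfAddHom (x : AddMonoidAlgebra k G) : AddMonoidAlgebra k G :=
  x.coeff.sum fun g a => single g a * D g

@[simp]
lemma derivOfAddHom_zero : derivOfAddHom D 0 = 0 :=
  Finsupp.sum_zero_index

lemma derivOfAddHom_add (x y : AddMonoidAlgebra k G) :
    derivOfAddHom D (x + y) = derivOfAddHom D x + derivOfAddHom D y :=
  Finsupp.sum_add_index' (by simp) (by simp [single_add, add_mul])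

lemma derivOfAddHom_single (g : G) (a : k) :
    derivOfAddHom D (single g a) = single g a * D g :=
  Finsupp.sum_single_index (by simp)

theorem derivOfAddHom_mul (x y : AddMonoidAlgebra k G) :
    derivOfAddHom D (x * y) = derivOfAddHom D x * y + x * derivOfAddHom D y := by
  induction x using induction_linear with
  | zero => simp
  | add x x' hx hx' => simp only [add_mul, derivOfAddHom_add, hx, hx']; ring
  | single g a =>
    induction y using induction_linear with
    | zero => simp
    | add y y' hy hy' => simp only [mul_add, derivOfAddHom_add, hy, hy']; ring
    | single h b =>
      simp only [single_mul_single, derivOfAddHom_single, map_add]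
      rw [mul_add, ← single_mul_single]
      ring

end AddMonoidAlgebra

open AddMonoidAlgebra

lemma hh_zero : hh 0 = 0 := Subtype.ext (by simp [hh])

lemma Mdet_add_left (α α' β γ : HalfInt × HalfInt × HalfInt) :
    Mdet F (α + α') β γ = Mdet F α β γ + Mdet F α' β γ := by
  simp only [Mdet, Matrix.det_fin_three, Prod.fst_add, Prod.snd_add, AddSubgroup.coe_add,
    Matrix.of_apply, Matrix.cons_val', Matrix.cons_val_zero, Matrix.cons_val_one,
    Matrix.cons_val_two, Matrix.head_cons, Matrix.tail_cons, Matrix.empty_val',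
    Matrix.cons_val_fin_one, Matrix.head_fin_const]
  push_cast
  ring

def bracketFactor (y z : A F) : HalfInt × HalfInt × HalfInt →+ A F :=
  AddMonoidHom.mk'
    (fun α => y.coeff.sum fun β b => z.coeff.sum fun γ c =>
      single (β + γ - nu) (b * c * Mdet F α β γ))
    (fun α α' => by
      simp only [Mdet_add_left, mul_add, single_add, Finsupp.sum_add])

lemma bracket_eq_derivOfAddHom (x y z : A F) :
    bracket F x y z = derivOfAddHom (bracketFactor F y z) x := by
  refine Finsupp.sum_congr fun α _ => ?_
  simp only [bracketFactor, AddMonoidHom.mk'_apply, Finsupp.mul_sum, single_mul_single]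
  refine Finsupp.sum_congr fun β _ => Finsupp.sum_congr fun γ _ => ?_
  rw [add_sub_assoc, add_sub_assoc, add_assoc, mul_assoc, mul_assoc, mul_assoc]

/-- the bracket satisfies the Leibniz rule with respect to the
commutative product, and `L_{0,0}^0` is the unit of `(A, ·)`; hence
`(A, ·, [·,·,·])` is a unital 3-Lie Poisson algebra. -/
theorem leibniz_rule_and_unital :
    (∀ x1 x2 y2 y3 : A F,
        bracket F (x1 * x2) y2 y3
          = bracket F x1 y2 y3 * x2 + x1 * bracket F x2 y2 y3)
      ∧ L F (hh 0) (hh 0) (hh 0) = (1 : A F) := by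
  refine ⟨fun x1 x2 y2 y3 => ?_, ?_⟩
  · simp only [bracket_eq_derivOfAddHom]
    exact derivOfAddHom_mul _ x1 x2
  · rw [L, hh_zero]
    exact one_def.symm
end
end

section
/- For half-integers l1, m1, r1, l2, m2, r2, l3, m3, r3 ∈ ½ℤ, define fi : ℝ³ → ℝ by fi(x, y, z) = y^{li} · z^{mi} · e^{ri·x} (real powers). Then at every point (x, y, z) with y > 0 and z > 0, the Jacobian determinant det(∂fi/∂x, ∂fi/∂y, ∂fi/∂z) (the 3×3 determinant whose (j,i)-entry is the partial derivative of fi with respect to the j-th coordinate) equals M · y^{l1+l2+l3−1} · z^{m1+m2+m3−1} · e^{(r1+r2+r3)·x}, where M is the determinant of the 3×3 matrix with rows (r1,r2,r3), (l1,l2,l3), (m1,m2,m3). Consequently the 3-Lie Poisson algebra A over ℝ is realized inside the canonical Nambu 3-Lie algebra of smooth functions via L_{l,m}^r ↦ y^l z^m e^{rx}. -/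
/-! Each partial derivative of `f = y^l z^m e^{rx}` is `f` times `r`, `l / y` or `m / z`, so the
Jacobian matrix factors as `diag(1, y⁻¹, z⁻¹) · M · diag(f₁, f₂, f₃)`. Its determinant is therefore
`det M · f₁ f₂ f₃ / (y z)`, and `f₁ f₂ f₃` is again a function of the same shape with the
exponents added. -/

noncomputable section

open Real

def nambuFun (l m r : ℝ) (x y z : ℝ) : ℝ := y ^ l * z ^ m * Real.exp (r * x)

theorem Matrix.det_of_mul_apply_mul {n R : Type*} [Fintype n] [DecidableEq n] [CommRing R]
    (A : Matrix n n R) (u v : n → R) :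
    (Matrix.of fun i j => u i * A i j * v j).det = (∏ i, u i) * A.det * ∏ j, v j := by
  have h : Matrix.of (fun i j => u i * A i j * v j) = diagonal u * A * diagonal v := by
    ext i j
    simp [diagonal_mul, mul_diagonal]
  rw [h, det_mul, det_mul, det_diagonal, det_diagonal]

section

variable (l m r x y z : ℝ)

theorem hasDerivAt_nambuFun_x :
    HasDerivAt (fun t => nambuFun l m r t y z) (r * nambuFun l m r x y z) x :=
  (((hasDerivAt_id' x).const_mul r).exp.const_mul (y ^ l * z ^ m)).congr_deriv <| by
    simp only [nambuFun]
    ring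

variable {y z}

theorem hasDerivAt_nambuFun_y (hy : y ≠ 0) :
    HasDerivAt (fun t => nambuFun l m r x t z) (y⁻¹ * (l * nambuFun l m r x y z)) y :=
  (((hasDerivAt_rpow_const (p := l) (Or.inl hy)).mul_const (z ^ m)).mul_const
    (exp (r * x))).congr_deriv <| by
    simp only [nambuFun, rpow_sub_one hy]
    field_simp

theorem hasDerivAt_nambuFun_z (hz : z ≠ 0) :
    HasDerivAt (fun t => nambuFun l m r x y t) (z⁻¹ * (m * nambuFun l m r x y z)) z :=
  (((hasDerivAt_rpow_const (p := m) (Or.inl hz)).const_mul (y ^ l)).mul_const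
    (exp (r * x))).congr_deriv <| by
    simp only [nambuFun, rpow_sub_one hz]
    field_simp

variable {l m r x}

theorem nambuFun_mul {l' m' r' : ℝ} (hy : 0 < y) (hz : 0 < z) :
    nambuFun l m r x y z * nambuFun l' m' r' x y z = nambuFun (l + l') (m + m') (r + r') x y z := by
  simp only [nambuFun, rpow_add hy, rpow_add hz, add_mul, exp_add]
  ring

end

theorem nambu_realization_general
    (l₁ m₁ r₁ l₂ m₂ r₂ l₃ m₃ r₃ : ℝ)
    (x y z : ℝ) (hy : 0 < y) (hz : 0 < z) :
    Matrix.det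
      !![deriv (fun t => nambuFun l₁ m₁ r₁ t y z) x,
         deriv (fun t => nambuFun l₂ m₂ r₂ t y z) x,
         deriv (fun t => nambuFun l₃ m₃ r₃ t y z) x;
         deriv (fun t => nambuFun l₁ m₁ r₁ x t z) y,
         deriv (fun t => nambuFun l₂ m₂ r₂ x t z) y,
         deriv (fun t => nambuFun l₃ m₃ r₃ x t z) y;
         deriv (fun t => nambuFun l₁ m₁ r₁ x y t) z,
         deriv (fun t => nambuFun l₂ m₂ r₂ x y t) z,
         deriv (fun t => nambuFun l₃ m₃ r₃ x y t) z]
      = Matrix.det !![r₁, r₂, r₃; l₁, l₂, l₃; m₁, m₂, m₃]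
          * y ^ (l₁ + l₂ + l₃ - 1) * z ^ (m₁ + m₂ + m₃ - 1)
          * Real.exp ((r₁ + r₂ + r₃) * x) := by
  simp only [(hasDerivAt_nambuFun_x _ _ _ x y z).deriv,
    (hasDerivAt_nambuFun_y _ _ _ x hy.ne').deriv, (hasDerivAt_nambuFun_z _ _ _ x hz.ne').deriv]
  set M := !![r₁, r₂, r₃; l₁, l₂, l₃; m₁, m₂, m₃]
  set f := ![nambuFun l₁ m₁ r₁ x y z, nambuFun l₂ m₂ r₂ x y z, nambuFun l₃ m₃ r₃ x y z]
  have hf : f 0 * f 1 * f 2 = nambuFun (l₁ + l₂ + l₃) (m₁ + m₂ + m₃) (r₁ + r₂ + r₃) x y z := by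
    simp only [f, Matrix.cons_val, nambuFun_mul hy hz]
  calc _ = (Matrix.of fun i j => ![1, y⁻¹, z⁻¹] i * M i j * f j).det := by
        congr 1
        ext i j
        fin_cases i <;> fin_cases j <;> simp [M, f, mul_assoc]
    _ = _ := by
      rw [Matrix.det_of_mul_apply_mul, Fin.prod_univ_three, Fin.prod_univ_three, hf,
        rpow_sub_one hy.ne', rpow_sub_one hz.ne']
      simp only [nambuFun, Matrix.cons_val]
      ring

/-- for half-integers `l₁, m₁, r₁, l₂, m₂, r₂, l₃, m₃, r₃ ∈ ½ℤ` and the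
functions `fᵢ(x,y,z) = y^{lᵢ} z^{mᵢ} e^{rᵢ x}`, at every point `(x,y,z)` with `y > 0`
and `z > 0`, the Jacobian determinant `∂(f₁,f₂,f₃)/∂(x,y,z)` equals
`M · y^{l₁+l₂+l₃-1} · z^{m₁+m₂+m₃-1} · e^{(r₁+r₂+r₃)x}`, where `M` is the determinant
of the matrix with rows `(r₁,r₂,r₃)`, `(l₁,l₂,l₃)`, `(m₁,m₂,m₃)`.  Hence the 3-Lie
Poisson algebra is realized inside the canonical Nambu 3-Lie algebra via
`L_{l,m}^r ↦ y^l z^m e^{r x}`. -/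
theorem nambu_realization
    (l₁ m₁ r₁ l₂ m₂ r₂ l₃ m₃ r₃ : ℝ)
    (hl₁ : ∃ k : ℤ, l₁ = k / 2) (hm₁ : ∃ k : ℤ, m₁ = k / 2) (hr₁ : ∃ k : ℤ, r₁ = k / 2)
    (hl₂ : ∃ k : ℤ, l₂ = k / 2) (hm₂ : ∃ k : ℤ, m₂ = k / 2) (hr₂ : ∃ k : ℤ, r₂ = k / 2)
    (hl₃ : ∃ k : ℤ, l₃ = k / 2) (hm₃ : ∃ k : ℤ, m₃ = k / 2) (hr₃ : ∃ k : ℤ, r₃ = k / 2)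
    (x y z : ℝ) (hy : 0 < y) (hz : 0 < z) :
    Matrix.det
      !![deriv (fun t => nambuFun l₁ m₁ r₁ t y z) x,
         deriv (fun t => nambuFun l₂ m₂ r₂ t y z) x,
         deriv (fun t => nambuFun l₃ m₃ r₃ t y z) x;
         deriv (fun t => nambuFun l₁ m₁ r₁ x t z) y,
         deriv (fun t => nambuFun l₂ m₂ r₂ x t z) y,
         deriv (fun t => nambuFun l₃ m₃ r₃ x t z) y;
         deriv (fun t => nambuFun l₁ m₁ r₁ x y t) z,
         deriv (fun t => nambuFun l₂ m₂ r₂ x y t) z,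
         deriv (fun t => nambuFun l₃ m₃ r₃ x y t) z]
      = Matrix.det !![r₁, r₂, r₃; l₁, l₂, l₃; m₁, m₂, m₃]
          * y ^ (l₁ + l₂ + l₃ - 1) * z ^ (m₁ + m₂ + m₃ - 1)
          * Real.exp ((r₁ + r₂ + r₃) * x) :=
  nambu_realization_general l₁ m₁ r₁ l₂ m₂ r₂ l₃ m₃ r₃ x y z hy hz
end
end

section
/- In A, set S_r = L_{0,1}^r and T_r = L_{1,0}^{−r} for r ∈ ℤ. Then the family {S_r, T_r : r ∈ ℤ} is linearly independent and for all l, m, n ∈ ℤ: [S_l, S_m, S_n] = 0; [T_l, T_m, T_n] = 0; [S_l, S_m, T_n] = (m−l) S_{l+m−n}; [S_l, T_m, T_n] = (n−m) T_{m+n−l}. Hence the 3-Lie algebra A_ω^δ embeds into the 3-Lie algebra (A, [·,·,·]). -/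
noncomputable section

variable (F : Type*) [Field F] [CharZero F]

variable {F}

/-- `S_r = L_{0,1}^r`. -/
def S5 (F : Type*) [Field F] [CharZero F] (r : ℤ) : A F := L F (hh 0) (hh 2) (hh (2 * r))

/-- `T_r = L_{1,0}^{−r}`. -/
def T5 (F : Type*) [Field F] [CharZero F] (r : ℤ) : A F := L F (hh 2) (hh 0) (hh (-(2 * r)))

/-!
Every `S_r` and `T_r` is a basis vector `L_α` of `A`, and the bracket of three basis vectors
is again a multiple of one basis vector, so the multiplication table reduces to adding indices
and evaluating a `3 × 3` determinant. Since `S_r` has `l = 0` and `T_r` has `m = 0`, brackets of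
three `S`'s or three `T`'s have a zero row in that determinant. Linear independence holds because
the indices of the `S_r` and `T_r` are pairwise distinct.
-/

lemma hh_injective : Function.Injective hh := fun a b h => by
  have h' : (a : ℚ) / 2 = b / 2 := congrArg Subtype.val h
  exact_mod_cast (div_left_inj' two_ne_zero).mp h'

@[simp]
lemma coe_hh (a : ℤ) : ((hh a : HalfInt) : ℚ) = a / 2 := rfl

lemma hh_add (a b : ℤ) : hh a + hh b = hh (a + b) :=
  Subtype.ext <| by push_cast [coe_hh]; ring

lemma hh_sub (a b : ℤ) : hh a - hh b = hh (a - b) :=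
  Subtype.ext <| by push_cast [coe_hh]; ring

section

omit [CharZero F]

lemma Mdet_eq (α β γ : HalfInt × HalfInt × HalfInt) :
    Mdet F α β γ =
      (((α.2.2 * (β.1 * γ.2.1 - γ.1 * β.2.1) - β.2.2 * (α.1 * γ.2.1 - γ.1 * α.2.1)
        + γ.2.2 * (α.1 * β.2.1 - β.1 * α.2.1) : ℚ)) : F) := by
  rw [Mdet, Matrix.det_fin_three]
  congr 1
  simp only [Matrix.of_apply, Matrix.cons_val', Matrix.cons_val_zero, Matrix.cons_val_one,
    Matrix.cons_val_two, Matrix.empty_val', Matrix.cons_val_fin_one, Matrix.head_cons,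
    Matrix.tail_cons, Matrix.head_fin_const]
  ring

lemma bracket_single_single_single (α β γ : HalfInt × HalfInt × HalfInt) (a b c : F) :
    bracket F (.single α a) (.single β b) (.single γ c) =
      .single (α + β + γ - nu) (a * b * c * Mdet F α β γ) := by
  simp only [bracket, AddMonoidAlgebra.coeff_single]
  rw [Finsupp.sum_single_index (by simp), Finsupp.sum_single_index (by simp),
    Finsupp.sum_single_index (by simp)]

lemma bracket_single_one (α β γ : HalfInt × HalfInt × HalfInt) :
    bracket F (.single α 1) (.single β 1) (.single γ 1) =
      Mdet F α β γ • (.single (α + β + γ - nu) 1 : A F) := by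
  rw [bracket_single_single_single, AddMonoidAlgebra.smul_single', one_mul, one_mul, one_mul,
    mul_one]

/-- The index `(0, 1, r)` of `S_r`. -/
def sIndex (r : ℤ) : HalfInt × HalfInt × HalfInt := (hh 0, hh 2, hh (2 * r))

/-- The index `(1, 0, -r)` of `T_r`. -/
def tIndex (r : ℤ) : HalfInt × HalfInt × HalfInt := (hh 2, hh 0, hh (-(2 * r)))

lemma sIndex_add_sIndex_add_tIndex (l m n : ℤ) :
    sIndex l + sIndex m + tIndex n - nu = sIndex (l + m - n) := by
  simp only [sIndex, tIndex, nu, Prod.mk_add_mk, Prod.mk_sub_mk, hh_add, hh_sub]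
  congr 3
  ring

lemma sIndex_add_tIndex_add_tIndex (l m n : ℤ) :
    sIndex l + tIndex m + tIndex n - nu = tIndex (m + n - l) := by
  simp only [sIndex, tIndex, nu, Prod.mk_add_mk, Prod.mk_sub_mk, hh_add, hh_sub]
  congr 3
  ring

lemma Mdet_sIndex_sIndex_sIndex (l m n : ℤ) :
    Mdet F (sIndex l) (sIndex m) (sIndex n) = 0 := by
  simp [Mdet_eq, sIndex]

lemma Mdet_tIndex_tIndex_tIndex (l m n : ℤ) :
    Mdet F (tIndex l) (tIndex m) (tIndex n) = 0 := by
  simp [Mdet_eq, tIndex]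

end

lemma Mdet_sIndex_sIndex_tIndex (l m n : ℤ) :
    Mdet F (sIndex l) (sIndex m) (tIndex n) = ((m - l : ℤ) : F) := by
  rw [Mdet_eq]
  simp only [sIndex, tIndex, coe_hh]
  push_cast
  ring

lemma Mdet_sIndex_tIndex_tIndex (l m n : ℤ) :
    Mdet F (sIndex l) (tIndex m) (tIndex n) = ((n - m : ℤ) : F) := by
  rw [Mdet_eq]
  simp only [sIndex, tIndex, coe_hh]
  push_cast
  ring

lemma S5_eq_single (r : ℤ) : S5 F r = .single (sIndex r) 1 := rfl

lemma T5_eq_single (r : ℤ) : T5 F r = .single (tIndex r) 1 := rfl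

lemma bracket_S5_S5_S5 (l m n : ℤ) : bracket F (S5 F l) (S5 F m) (S5 F n) = 0 := by
  rw [S5_eq_single, S5_eq_single, S5_eq_single, bracket_single_one, Mdet_sIndex_sIndex_sIndex,
    zero_smul]

lemma bracket_T5_T5_T5 (l m n : ℤ) : bracket F (T5 F l) (T5 F m) (T5 F n) = 0 := by
  rw [T5_eq_single, T5_eq_single, T5_eq_single, bracket_single_one, Mdet_tIndex_tIndex_tIndex,
    zero_smul]

lemma bracket_S5_S5_T5 (l m n : ℤ) :
    bracket F (S5 F l) (S5 F m) (T5 F n) = ((m - l : ℤ) : F) • S5 F (l + m - n) := by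
  rw [S5_eq_single, S5_eq_single, T5_eq_single, bracket_single_one, Mdet_sIndex_sIndex_tIndex,
    sIndex_add_sIndex_add_tIndex, S5_eq_single]

lemma bracket_S5_T5_T5 (l m n : ℤ) :
    bracket F (S5 F l) (T5 F m) (T5 F n) = ((n - m : ℤ) : F) • T5 F (m + n - l) := by
  rw [S5_eq_single, T5_eq_single, T5_eq_single, bracket_single_one, Mdet_sIndex_tIndex_tIndex,
    sIndex_add_tIndex_add_tIndex, T5_eq_single]

lemma injective_sumElim_sIndex_tIndex : Function.Injective (Sum.elim sIndex tIndex) := by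
  refine Function.Injective.sumElim ?_ ?_ fun a b h => ?_
  · intro a b h
    have := hh_injective (congrArg (·.2.2) h)
    omega
  · intro a b h
    have := hh_injective (congrArg (·.2.2) h)
    omega
  · have := hh_injective (congrArg (·.1) h)
    omega

lemma linearIndependent_S5_T5 :
    LinearIndependent F (fun s : ℤ ⊕ ℤ => Sum.elim (S5 F) (T5 F) s) := by
  have hfamily : (fun s : ℤ ⊕ ℤ => Sum.elim (S5 F) (T5 F) s) =
      AddMonoidAlgebra.basis _ F ∘ Sum.elim sIndex tIndex := by
    funext s
    cases s <;> simp [AddMonoidAlgebra.basis_apply, S5_eq_single, T5_eq_single]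
  rw [hfamily]
  exact (AddMonoidAlgebra.basis _ F).linearIndependent.comp _ injective_sumElim_sIndex_tIndex

/-- the family `{S_r, T_r : r ∈ ℤ}` is linearly independent and
satisfies the multiplication table of the 3-Lie algebra `A_ω^δ`; hence `A_ω^δ`
embeds into the 3-Lie algebra `(A, [·,·,·])`. -/
theorem Aomegadelta_embeds (F : Type*) [Field F] [CharZero F] :
    LinearIndependent F (fun s : ℤ ⊕ ℤ => Sum.elim (S5 F) (T5 F) s)
      ∧ (∀ l m n : ℤ, bracket F (S5 F l) (S5 F m) (S5 F n) = 0)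
      ∧ (∀ l m n : ℤ, bracket F (T5 F l) (T5 F m) (T5 F n) = 0)
      ∧ (∀ l m n : ℤ, bracket F (S5 F l) (S5 F m) (T5 F n)
          = ((m - l : ℤ) : F) • S5 F (l + m - n))
      ∧ (∀ l m n : ℤ, bracket F (S5 F l) (T5 F m) (T5 F n)
          = ((n - m : ℤ) : F) • T5 F (m + n - l)) :=
  ⟨linearIndependent_S5_T5, bracket_S5_S5_S5, bracket_T5_T5_T5, bracket_S5_S5_T5,
    bracket_S5_T5_T5⟩
end
end

section
/- Let H ⊆ A be the F-subspace spanned by {L_{i,i}^t : i, t ∈ ½ℤ}. For any l, m, r ∈ ½ℤ: (a) [L_{l,m}^r, H, H] ⊆ H if and only if l = m (i.e., if and only if L_{l,m}^r ∈ H); and (b) L_{l,m}^r · L_{i,i}^t ∈ H for all i, t ∈ ½ℤ if and only if l = m. -/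
/-!
`H` is the span of the basis elements whose index lies in the additive subgroup `l = m` of
`(½ℤ)³`. That subgroup contains `ν = (1, 1, 0)`, so `H` is closed under the product and the
bracket. Conversely, bracketing `L_{l,m}^r` with `L_{1,1}^0, L_{0,0}^1 ∈ H` gives
`(l - m) L_{l,m}^{r+1}`, and multiplying it by `L_{0,0}^0 ∈ H` gives `L_{l,m}^r` itself.
-/

noncomputable section

variable (F : Type*) [Field F] [CharZero F]

/-- The subspace `H` of `A` spanned by `{L_{i,i}^t : i, t ∈ ½ℤ}`. -/
def H (F : Type*) [Field F] [CharZero F] : Submodule F (A F) :=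
  Submodule.span F {x : A F | ∃ i t : HalfInt, x = L F i i t}

open AddMonoidAlgebra

def diagonal : AddSubgroup (HalfInt × HalfInt × HalfInt) where
  carrier := {p | p.1 = p.2.1}
  add_mem' := by rintro a b (ha : a.1 = a.2.1) (hb : b.1 = b.2.1); simp [ha, hb]
  zero_mem' := rfl
  neg_mem' := by rintro a (ha : a.1 = a.2.1); simp [ha]

lemma mem_diagonal {p : HalfInt × HalfInt × HalfInt} : p ∈ diagonal ↔ p.1 = p.2.1 := .rfl

lemma nu_mem_diagonal : nu ∈ diagonal := rfl

lemma H_eq_supported : H F = supported F F (diagonal : Set (HalfInt × HalfInt × HalfInt)) := by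
  rw [supported_eq_span_single, H]
  congr 1
  ext x
  constructor
  · rintro ⟨i, t, rfl⟩
    exact ⟨(i, i, t), rfl, rfl⟩
  · rintro ⟨⟨i, j, t⟩, hij : i = j, rfl⟩
    exact ⟨i, t, by rw [hij]; rfl⟩

lemma mem_H_iff {x : A F} : x ∈ H F ↔ ∀ p ∈ x.coeff.support, p ∈ diagonal := by
  rw [H_eq_supported, mem_supported]
  rfl

lemma single_mem_H_iff {p : HalfInt × HalfInt × HalfInt} {c : F} (hc : c ≠ 0) :
    single p c ∈ H F ↔ p ∈ diagonal := by
  simp [mem_H_iff, coeff_single, Finsupp.support_single _ hc]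

lemma L_mem_H_iff {l m r : HalfInt} : L F l m r ∈ H F ↔ l = m :=
  (single_mem_H_iff F one_ne_zero).trans mem_diagonal

omit [CharZero F] in
lemma L_mul_L (l m r i j t : HalfInt) : L F l m r * L F i j t = L F (l + i) (m + j) (r + t) := by
  rw [L, L, single_mul_single, one_mul]
  rfl

omit [CharZero F] in
lemma bracket_single (α β γ : HalfInt × HalfInt × HalfInt) (a b c : F) :
    bracket F (single α a) (single β b) (single γ c)
      = single (α + β + γ - nu) (a * b * c * Mdet F α β γ) := by
  simp [bracket, coeff_single, Finsupp.sum_single_index]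

lemma bracket_mem_H {x y z : A F} (hx : x ∈ H F) (hy : y ∈ H F) (hz : z ∈ H F) :
    bracket F x y z ∈ H F := by
  rw [mem_H_iff] at hx hy hz
  refine Submodule.finsuppSum_mem _ _ _ _ fun α hα ↦ Submodule.finsuppSum_mem _ _ _ _ fun β hβ ↦
    Submodule.finsuppSum_mem _ _ _ _ fun γ hγ ↦ ?_
  by_cases hc : x.coeff α * y.coeff β * z.coeff γ * Mdet F α β γ = 0
  · rw [hc, single_zero]
    exact zero_mem _
  · rw [single_mem_H_iff F hc]
    exact sub_mem (add_mem (add_mem (hx α (Finsupp.mem_support_iff.2 hα))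
      (hy β (Finsupp.mem_support_iff.2 hβ))) (hz γ (Finsupp.mem_support_iff.2 hγ))) nu_mem_diagonal

lemma Mdet_nu (l m r : HalfInt) :
    Mdet F (l, m, r) nu (0, 0, hh 2) = (((l : ℚ) - m : ℚ) : F) := by
  simp [Mdet, nu, hh, Matrix.det_fin_three]

lemma bracket_L_nu (l m r : HalfInt) :
    bracket F (L F l m r) (L F (hh 2) (hh 2) (hh 0)) (L F 0 0 (hh 2))
      = single (l, m, r + hh 2) (((l : ℚ) - m : ℚ) : F) := by
  rw [L, L, L, ← nu, bracket_single, Mdet_nu]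
  congr 1
  · ext <;> simp [nu, hh]
  · ring

/-- for any `l, m, r ∈ ½ℤ`: (a) `[L_{l,m}^r, H, H] ⊆ H` iff `l = m`
(equivalently, iff `L_{l,m}^r ∈ H`); and (b) `L_{l,m}^r · L_{i,i}^t ∈ H` for all
`i, t ∈ ½ℤ` iff `l = m`. -/
theorem H_normalizer (l m r : HalfInt) :
    ((∀ a ∈ H F, ∀ b ∈ H F, bracket F (L F l m r) a b ∈ H F) ↔ l = m)
      ∧ (L F l m r ∈ H F ↔ l = m)
      ∧ ((∀ i t : HalfInt, L F l m r * L F i i t ∈ H F) ↔ l = m) := by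
  refine ⟨⟨fun h ↦ ?_, ?_⟩, L_mem_H_iff F, fun h ↦ ?_, ?_⟩
  · by_contra hne
    have hlm : (((l : ℚ) - m : ℚ) : F) ≠ 0 :=
      Rat.cast_ne_zero.2 (sub_ne_zero.2 fun h ↦ hne (Subtype.ext h))
    have hmem := h (L F (hh 2) (hh 2) (hh 0)) ((L_mem_H_iff F).2 rfl) (L F 0 0 (hh 2))
      ((L_mem_H_iff F).2 rfl)
    rw [bracket_L_nu, single_mem_H_iff F hlm] at hmem
    exact hne hmem
  · rintro rfl a ha b hb
    exact bracket_mem_H F ((L_mem_H_iff F).2 rfl) ha hb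
  · simpa [L_mul_L, L_mem_H_iff] using h 0 0
  · rintro rfl i t
    rw [L_mul_L, L_mem_H_iff]
end
end

section
/- Let V be the ℂ-vector space with basis {Q_n, R_n : n ∈ ℤ} and, for a parameter z ∈ ℂ, define the alternating trilinear bracket on V by: [Q_k, Q_m, Q_n] = (k−m)(m−n)(k−n) R_{k+m+n}; [Q_p, Q_q, R_k] = (p−q)(Q_{k+p+q} + z·k·R_{k+p+q}); [Q_p, R_q, R_k] = (k−q) R_{k+p+q}; [R_p, R_q, R_k] = 0, for all k, m, n, p, q ∈ ℤ. Then this bracket satisfies the Fundamental Identity [[x1,x2,x3],y2,y3] = [[x1,y2,y3],x2,x3] + [x1,[x2,y2,y3],x3] + [x1,x2,[x3,y2,y3]] for all elements of V if and only if z = 2√−1 or z = −2√−1 (equivalently z² = −4). In these cases (V, [·,·,·]) is the 3-Virasoro-Witt 3-Lie algebra W₃. -/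
/-!
Both sides of the Fundamental Identity are linear in each of its five arguments, so it suffices
to check it on basis vectors. There both sides are multiples of `Q_N` and `R_N`, `N` the sum of
the five indices, and the identity becomes a polynomial identity in the indices and `z` that holds
modulo `z ^ 2 + 4`. Conversely, at `(Q₋₁, Q₀, Q₁; Q₀, R₋₁)` the `R₋₁`-coordinates of the two sides
are `-2` and `6 + 2 z ^ 2`.
-/

noncomputable section

namespace W3

/-- The ℂ-vector space with basis `{Q_n, R_n : n ∈ ℤ}`, realized as finitely
supported functions on `ℤ ⊕ ℤ` (`inl n ↦ Q_n`, `inr n ↦ R_n`). -/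
abbrev V : Type := (ℤ ⊕ ℤ) →₀ ℂ

/-- The basis vector `Q_n`. -/
def Qb (n : ℤ) : V := Finsupp.single (Sum.inl n) 1

/-- The basis vector `R_n`. -/
def Rb (n : ℤ) : V := Finsupp.single (Sum.inr n) 1

/-- The values of the bracket on basis elements (extended skew-symmetrically from
the defining relations):
`[Q_k,Q_m,Q_n] = (k−m)(m−n)(k−n) R_{k+m+n}`,
`[Q_p,Q_q,R_k] = (p−q)(Q_{k+p+q} + z·k·R_{k+p+q})`,
`[Q_p,R_q,R_k] = (k−q) R_{k+p+q}`, `[R_p,R_q,R_k] = 0`. -/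
def br0 (z : ℂ) : ℤ ⊕ ℤ → ℤ ⊕ ℤ → ℤ ⊕ ℤ → V
  | Sum.inl k, Sum.inl m, Sum.inl n =>
      (((k - m) * (m - n) * (k - n) : ℤ) : ℂ) • Rb (k + m + n)
  | Sum.inl p, Sum.inl q, Sum.inr k =>
      ((p - q : ℤ) : ℂ) • (Qb (k + p + q) + (z * k) • Rb (k + p + q))
  | Sum.inl p, Sum.inr k, Sum.inl q =>
      -(((p - q : ℤ) : ℂ) • (Qb (k + p + q) + (z * k) • Rb (k + p + q)))
  | Sum.inr k, Sum.inl p, Sum.inl q =>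
      ((p - q : ℤ) : ℂ) • (Qb (k + p + q) + (z * k) • Rb (k + p + q))
  | Sum.inl p, Sum.inr q, Sum.inr k => ((k - q : ℤ) : ℂ) • Rb (k + p + q)
  | Sum.inr q, Sum.inl p, Sum.inr k => -(((k - q : ℤ) : ℂ) • Rb (k + p + q))
  | Sum.inr q, Sum.inr k, Sum.inl p => ((k - q : ℤ) : ℂ) • Rb (k + p + q)
  | Sum.inr _, Sum.inr _, Sum.inr _ => 0

/-- The trilinear extension of `br0` to all of `V`. -/
def br (z : ℂ) (x y w : V) : V :=
  Finsupp.sum x fun α a => Finsupp.sum y fun β b => Finsupp.sum w fun γ c =>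
    (a * b * c) • br0 z α β γ

section

variable {R M ι : Type*} [CommRing R] [AddCommGroup M] [Module R M]

def FundamentalIdentity (B : M →ₗ[R] M →ₗ[R] M →ₗ[R] M) : Prop :=
  ∀ x1 x2 x3 y2 y3 : M,
    B (B x1 x2 x3) y2 y3 = B (B x1 y2 y3) x2 x3 + B x1 (B x2 y2 y3) x3 + B x1 x2 (B x3 y2 y3)

lemma forall_eq_zero_of_basis {N : Type*} [AddCommGroup N] [Module R N] {f : M → N}
    (b : Module.Basis ι R M) (h : ∀ i, f (b i) = 0) (hf : IsLinearMap R f) : ∀ x, f x = 0 :=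
  LinearMap.congr_fun (b.ext (f₁ := hf.mk' f) (f₂ := 0) h)

lemma fundamentalIdentity_of_basis (b : Module.Basis ι R M) (B : M →ₗ[R] M →ₗ[R] M →ₗ[R] M)
    (h : ∀ i1 i2 i3 i4 i5 : ι,
      B (B (b i1) (b i2) (b i3)) (b i4) (b i5)
        = B (B (b i1) (b i4) (b i5)) (b i2) (b i3) + B (b i1) (B (b i2) (b i4) (b i5)) (b i3)
          + B (b i1) (b i2) (B (b i3) (b i4) (b i5))) :
    FundamentalIdentity B := by
  intro x1 x2 x3 y2 y3
  rw [← sub_eq_zero]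
  revert x1; refine forall_eq_zero_of_basis b (fun i1 => ?_) ?lin1
  revert x2; refine forall_eq_zero_of_basis b (fun i2 => ?_) ?lin2
  revert x3; refine forall_eq_zero_of_basis b (fun i3 => ?_) ?lin3
  revert y2; refine forall_eq_zero_of_basis b (fun i4 => ?_) ?lin4
  revert y3; refine forall_eq_zero_of_basis b (fun i5 => ?_) ?lin5
  · exact sub_eq_zero.mpr (h i1 i2 i3 i4 i5)
  all_goals constructor <;> intros <;>
    simp only [map_add, map_smul, LinearMap.add_apply, LinearMap.smul_apply] <;> module

end

open Finsupp

def lbr (z : ℂ) : V →ₗ[ℂ] V →ₗ[ℂ] V →ₗ[ℂ] V :=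
  linearCombination ℂ fun α => linearCombination ℂ fun β => linearCombination ℂ (br0 z α β)

lemma br_eq_lbr (z : ℂ) : br z = fun x y w => lbr z x y w := by
  ext x y w : 3
  simp only [br, lbr, linearCombination_apply, LinearMap.finsupp_sum_apply,
    LinearMap.smul_apply, Finsupp.smul_sum, smul_smul]

lemma lbr_single (z : ℂ) (α β γ : ℤ ⊕ ℤ) :
    lbr z (single α 1) (single β 1) (single γ 1) = br0 z α β γ := by
  simp [lbr]

lemma lbr_single_fundamentalIdentity {z : ℂ} (hz : z ^ 2 = -4) (α1 α2 α3 α4 α5 : ℤ ⊕ ℤ) :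
    lbr z (lbr z (single α1 1) (single α2 1) (single α3 1)) (single α4 1) (single α5 1)
      = lbr z (lbr z (single α1 1) (single α4 1) (single α5 1)) (single α2 1) (single α3 1)
        + lbr z (single α1 1) (lbr z (single α2 1) (single α4 1) (single α5 1)) (single α3 1)
        + lbr z (single α1 1) (single α2 1) (lbr z (single α3 1) (single α4 1) (single α5 1)) := by
  -- `map_neg` does not fire on `lbr z (-x)`, hence `← neg_smul`; `ring_nf` normalizes the
  -- indices so that equal basis vectors become syntactically equal for `match_scalars`.
  rcases α1 with k | k <;> rcases α2 with m | m <;> rcases α3 with n | n <;>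
    rcases α4 with p | p <;> rcases α5 with q | q <;>
    simp only [lbr_single, br0, Qb, Rb, map_add, map_smul, ← neg_smul, map_zero,
      LinearMap.add_apply, LinearMap.smul_apply, LinearMap.zero_apply] <;>
    (try ring_nf) <;> match_scalars <;> grind

lemma fundamentalIdentity_lbr {z : ℂ} (hz : z ^ 2 = -4) : FundamentalIdentity (lbr z) :=
  fundamentalIdentity_of_basis Finsupp.basisSingleOne (lbr z) fun α1 α2 α3 α4 α5 => by
    simpa only [coe_basisSingleOne] using lbr_single_fundamentalIdentity hz α1 α2 α3 α4 α5

lemma sq_eq_neg_four_of_fundamentalIdentity_lbr {z : ℂ} (h : FundamentalIdentity (lbr z)) :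
    z ^ 2 = -4 := by
  have hFI := h (Qb (-1)) (Qb 0) (Qb 1) (Qb 0) (Rb (-1))
  simp only [Qb, Rb, lbr_single, br0, map_add, map_smul, ← neg_smul,
    LinearMap.add_apply, LinearMap.smul_apply] at hFI
  have hcoeff : (-2 : ℂ) = 6 + z * (z * 2) := by simpa using congr($hFI (Sum.inr (-1)))
  linear_combination -hcoeff / 2

/-- the bracket on `V` satisfies the Fundamental Identity if and
only if `z = 2√−1` or `z = −2√−1`; in these cases `(V, [·,·,·])` is the
3-Virasoro–Witt 3-Lie algebra `W₃`. -/
theorem fundamental_identity_iff (z : ℂ) :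
    (∀ x1 x2 x3 y2 y3 : V,
        br z (br z x1 x2 x3) y2 y3
          = br z (br z x1 y2 y3) x2 x3 + br z x1 (br z x2 y2 y3) x3
            + br z x1 x2 (br z x3 y2 y3))
      ↔ (z = 2 * Complex.I ∨ z = -(2 * Complex.I)) := by
  have hI : (2 * Complex.I) ^ 2 = -4 := by rw [mul_pow, Complex.I_sq]; norm_num
  rw [br_eq_lbr]
  change FundamentalIdentity (lbr z) ↔ _
  rw [← sq_eq_sq_iff_eq_or_eq_neg, hI]
  exact ⟨sq_eq_neg_four_of_fundamentalIdentity_lbr, fundamentalIdentity_lbr⟩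

end W3
end
end

section
/- Let U be the F-vector space with basis {U_n : n ∈ ℤ} and define the alternating trilinear bracket on U by [U_l, U_m, U_n] = D(l,m,n) · U_{l+m+n−1}, where D(l,m,n) is the determinant of the 3×3 matrix with rows ((−1)^l, (−1)^m, (−1)^n), (1, 1, 1), (l, m, n), for all l, m, n ∈ ℤ. Then (U, [·,·,·]) is a simple 3-Lie algebra A_ω: the bracket satisfies the Fundamental Identity, and every F-subspace I ⊆ U with [I, U, U] ⊆ I and I ≠ 0 equals U. -/
noncomputable section

namespace Aomega

variable (F : Type*) [Field F] [CharZero F]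

/-- The `F`-vector space `U` with basis `{U_n : n ∈ ℤ}`, realized as finitely
supported functions on `ℤ`. -/
abbrev U : Type _ := ℤ →₀ F

/-- The basis vector `U_n`. -/
def Ub (n : ℤ) : U F := Finsupp.single n 1

/-- `D(l,m,n)`: the determinant of the 3×3 matrix with rows
`((−1)^l, (−1)^m, (−1)^n)`, `(1,1,1)`, `(l,m,n)`, in `F`. -/
def Ddet (l m n : ℤ) : F :=
  Matrix.det !![((l.negOnePow : ℤ) : F), ((m.negOnePow : ℤ) : F), ((n.negOnePow : ℤ) : F);
                1, 1, 1;
                (l : F), (m : F), (n : F)]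

/-- The trilinear bracket on `U`, determined on basis elements by
`[U_l, U_m, U_n] = D(l,m,n) · U_{l+m+n−1}`. -/
def br (x y w : U F) : U F :=
  Finsupp.sum x fun l a => Finsupp.sum y fun m b => Finsupp.sum w fun n c =>
    (a * b * c * Ddet F l m n) • Ub F (l + m + n - 1)

set_option linter.unusedSectionVars false

def brT : U F →ₗ[F] U F →ₗ[F] U F →ₗ[F] U F :=
  Finsupp.lsum F fun l => LinearMap.toSpanSingleton F _ (
    Finsupp.lsum F fun m => LinearMap.toSpanSingleton F _ (
      Finsupp.lsum F fun n => LinearMap.toSpanSingleton F (U F)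
        (Ddet F l m n • Ub F (l + m + n - 1))))

lemma br_eq (x y w : U F) : br F x y w = brT F x y w := by
  simp only [br, brT, Finsupp.lsum_apply, LinearMap.toSpanSingleton_apply,
    LinearMap.finsupp_sum_apply, LinearMap.smul_apply,
    Finsupp.smul_sum, smul_smul, mul_assoc]

lemma brT_single (l m n : ℤ) (a b c : F) :
    brT F (Finsupp.single l a) (Finsupp.single m b) (Finsupp.single n c)
      = (a * b * c * Ddet F l m n) • Ub F (l + m + n - 1) := by
  rw [← br_eq]
  unfold br
  rw [Finsupp.sum_single_index (by simp only [zero_mul, zero_smul, Finsupp.sum_fun_zero]),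
      Finsupp.sum_single_index (by simp only [mul_zero, zero_mul, zero_smul, Finsupp.sum_fun_zero]),
      Finsupp.sum_single_index (by simp only [mul_zero, zero_mul, zero_smul])]

def eps (l : ℤ) : F := ((l.negOnePow : ℤ) : F)

lemma eps_add (l m : ℤ) : eps F (l + m) = eps F l * eps F m := by
  simp [eps, Int.negOnePow_add]
lemma eps_sub (l m : ℤ) : eps F (l - m) = eps F l * eps F m := by
  simp [eps, Int.negOnePow_sub]
lemma eps_one : eps F 1 = -1 := by simp [eps, Int.negOnePow_one]
lemma eps_units (l : ℤ) : eps F l = 1 ∨ eps F l = -1 := by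
  rcases Int.units_eq_one_or l.negOnePow with h | h <;> [left; right] <;> simp [eps, h]

lemma Ddet_eq (l m n : ℤ) :
    Ddet F l m n = eps F l * ((n : F) - m) - eps F m * ((n : F) - l) + eps F n * ((m : F) - l) := by
  simp [Ddet, Matrix.det_fin_three, eps]; ring

theorem Ddet_FI (l1 l2 l3 m2 m3 : ℤ) :
    Ddet F l1 l2 l3 * Ddet F (l1+l2+l3-1) m2 m3
      = Ddet F l1 m2 m3 * Ddet F (l1+m2+m3-1) l2 l3
        + Ddet F l2 m2 m3 * Ddet F l1 (l2+m2+m3-1) l3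
        + Ddet F l3 m2 m3 * Ddet F l1 l2 (l3+m2+m3-1) := by
  simp only [Ddet_eq, eps_add, eps_sub, eps_one]
  push_cast
  rcases eps_units F l1 with h1 | h1 <;>
  rcases eps_units F l2 with h2 | h2 <;>
  rcases eps_units F l3 with h3 | h3 <;>
  rcases eps_units F m2 with h4 | h4 <;>
  rcases eps_units F m3 with h5 | h5 <;>
  rw [h1, h2, h3, h4, h5] <;> ring

theorem FI (x1 x2 x3 y2 y3 : U F) :
    br F (br F x1 x2 x3) y2 y3
      = br F (br F x1 y2 y3) x2 x3 + br F x1 (br F x2 y2 y3) x3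
        + br F x1 x2 (br F x3 y2 y3) := by
  simp only [br_eq]
  induction x1 using Finsupp.induction_linear with
  | zero => simp only [map_zero, LinearMap.zero_apply, zero_add, add_zero]
  | add f g hf hg => simp only [map_add, LinearMap.add_apply, hf, hg]; abel
  | single l1 a1 =>
  induction x2 using Finsupp.induction_linear with
  | zero => simp only [map_zero, LinearMap.zero_apply, map_zero, zero_add, add_zero]
  | add f g hf hg => simp only [map_add, LinearMap.add_apply, hf, hg]; abel
  | single l2 a2 =>
  induction x3 using Finsupp.induction_linear with
  | zero => simp only [map_zero, LinearMap.zero_apply, zero_add, add_zero]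
  | add f g hf hg => simp only [map_add, LinearMap.add_apply, hf, hg]; abel
  | single l3 a3 =>
  induction y2 using Finsupp.induction_linear with
  | zero => simp only [map_zero, LinearMap.zero_apply, zero_add, add_zero]
  | add f g hf hg => simp only [map_add, LinearMap.add_apply, hf, hg]; abel
  | single m2 b2 =>
  induction y3 using Finsupp.induction_linear with
  | zero => simp only [map_zero, LinearMap.zero_apply, zero_add, add_zero]
  | add f g hf hg => simp only [map_add, LinearMap.add_apply, hf, hg]; abel
  | single m3 b3 =>
  simp only [brT_single, Ub, map_smul, LinearMap.smul_apply, brT_single, smul_smul]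
  have e1 : l1 + l2 + l3 - 1 + m2 + m3 - 1 = l1+l2+l3+m2+m3-2 := by ring
  have e2 : l1 + m2 + m3 - 1 + l2 + l3 - 1 = l1+l2+l3+m2+m3-2 := by ring
  have e3 : l1 + (l2 + m2 + m3 - 1) + l3 - 1 = l1+l2+l3+m2+m3-2 := by ring
  have e4 : l1 + l2 + (l3 + m2 + m3 - 1) - 1 = l1+l2+l3+m2+m3-2 := by ring
  rw [e1, e2, e3, e4]
  rw [Finsupp.smul_single, Finsupp.smul_single, Finsupp.smul_single, Finsupp.smul_single,
      ← Finsupp.single_add, ← Finsupp.single_add]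
  refine congrArg _ ?_
  simp only [smul_eq_mul, mul_one]
  linear_combination (a1*a2*a3*b2*b3) * Ddet_FI F l1 l2 l3 m2 m3

lemma br_single (l m n : ℤ) (a b c : F) :
    br F (Finsupp.single l a) (Finsupp.single m b) (Finsupp.single n c)
      = (a * b * c * Ddet F l m n) • Ub F (l + m + n - 1) := by
  unfold br
  rw [Finsupp.sum_single_index (by simp only [zero_mul, zero_smul, Finsupp.sum_fun_zero]),
      Finsupp.sum_single_index (by simp only [mul_zero, zero_mul, zero_smul, Finsupp.sum_fun_zero]),
      Finsupp.sum_single_index (by simp only [mul_zero, zero_mul, zero_smul])]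
lemma br_ub (x : U F) (a b : ℤ) :
    br F x (Ub F a) (Ub F b)
      = x.sum fun l v => Finsupp.single (l + a + b - 1) (v * Ddet F l a b) := by
  unfold br Ub
  refine Finsupp.sum_congr fun l hl => ?_
  rw [Finsupp.sum_single_index (by simp only [mul_zero, zero_mul, zero_smul, Finsupp.sum_fun_zero]),
      Finsupp.sum_single_index (by simp only [mul_zero, zero_mul, zero_smul])]
  rw [Finsupp.smul_single, smul_eq_mul, mul_one, mul_one, mul_one]
lemma br_coeff (x : U F) (a b k : ℤ) :
    (br F x (Ub F a) (Ub F b)) k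
      = x (k - a - b + 1) * Ddet F (k - a - b + 1) a b := by
  rw [br_ub, Finsupp.sum_apply]
  have h : ∀ l v, (Finsupp.single (l + a + b - 1) (v * Ddet F l a b) : U F) k
      = if l = k - a - b + 1 then v * Ddet F l a b else 0 := by
    intro l v
    rw [Finsupp.single_apply]
    by_cases h : l = k - a - b + 1
    · rw [if_pos h, if_pos (by omega)]
    · rw [if_neg h, if_neg (by omega)]
  simp only [h]
  rw [Finsupp.sum_ite_eq']
  split
  · rfl
  · next hmem => rw [Finsupp.notMem_support_iff.mp hmem, zero_mul]

-- parity values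
lemma eps_even {n : ℤ} (h : Even n) : eps F n = 1 := by
  simp [eps, Int.negOnePow_even _ h]
lemma eps_odd {n : ℤ} (h : Odd n) : eps F n = -1 := by
  simp [eps, Int.negOnePow_odd _ h]
lemma eps_zero : eps F 0 = 1 := eps_even F Even.zero
lemma eps_two : eps F 2 = 1 := eps_even F ⟨1, rfl⟩
lemma eps_three : eps F 3 = -1 := eps_odd F ⟨1, rfl⟩
lemma eps_neg_one : eps F (-1) = -1 := eps_odd F ⟨-1, by norm_num⟩
lemma eps_neg_two : eps F (-2) = 1 := eps_even F ⟨-1, by norm_num⟩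

lemma Ddet02 (m : ℤ) : Ddet F m 0 2 = 2 * eps F m - 2 := by
  rw [Ddet_eq, eps_zero, eps_two]; push_cast; ring

lemma Ddet01 (m : ℤ) : Ddet F m 0 1 = eps F m + 2*(m : F) - 1 := by
  rw [Ddet_eq, eps_zero, eps_one]; push_cast; ring

section Ideal
variable {F}
variable {I : Submodule F (U F)} (hI : ∀ x ∈ I, ∀ y z : U F, br F x y z ∈ I)

include hI

/-- generic step lemma -/
lemma Ub_step {n : ℤ} (a b m : ℤ) (hm : m = n + a + b - 1)
    (h : Ub F n ∈ I) (hD : Ddet F n a b ≠ 0) : Ub F m ∈ I := by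
  have h2 := hI _ h (Ub F a) (Ub F b)
  have h3 : br F (Ub F n) (Ub F a) (Ub F b) = Ddet F n a b • Ub F (n + a + b - 1) := by
    unfold Ub; rw [br_single, one_mul, one_mul, one_mul]; rfl
  rw [h3] at h2
  have := I.smul_mem (Ddet F n a b)⁻¹ h2
  rwa [inv_smul_smul₀ hD, ← hm] at this

lemma up_odd {n : ℤ} (hn : Odd n) (h : Ub F n ∈ I) : Ub F (n+1) ∈ I := by
  refine Ub_step hI 0 2 _ (by ring) h ?_
  rw [Ddet_eq, eps_odd F hn, eps_zero, eps_two]; push_cast; intro hc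
  have : (-4 : F) = 0 := by linear_combination hc
  norm_num at this

lemma up3_even {n : ℤ} (hn : Even n) (h : Ub F n ∈ I) : Ub F (n+3) ∈ I := by
  refine Ub_step hI 1 3 _ (by ring) h ?_
  rw [Ddet_eq, eps_even F hn, eps_one, eps_three]; push_cast; intro hc
  have : (4 : F) = 0 := by linear_combination hc
  norm_num at this

lemma down_even {n : ℤ} (hn : Even n) (h : Ub F n ∈ I) : Ub F (n-1) ∈ I := by
  refine Ub_step hI 1 (-1) _ (by ring) h ?_
  rw [Ddet_eq, eps_even F hn, eps_one, eps_neg_one]; push_cast; intro hc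
  have : (-4 : F) = 0 := by linear_combination hc
  norm_num at this

lemma down3_odd {n : ℤ} (hn : Odd n) (h : Ub F n ∈ I) : Ub F (n-3) ∈ I := by
  refine Ub_step hI 0 (-2) _ (by ring) h ?_
  rw [Ddet_eq, eps_odd F hn, eps_zero, eps_neg_two]; push_cast; intro hc
  have : (4 : F) = 0 := by linear_combination hc
  norm_num at this

lemma up2 {n : ℤ} (hn1 : n ≠ 1) (hn2 : n ≠ 2) (h : Ub F n ∈ I) : Ub F (n+2) ∈ I := by
  refine Ub_step hI 1 2 _ (by ring) h ?_
  rw [Ddet_eq, eps_one, eps_two]; push_cast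
  rcases Int.even_or_odd n with he | ho
  · rw [eps_even F he]; intro hc
    have : (n : F) = 2 := by linear_combination -hc/2
    exact hn2 (by exact_mod_cast this)
  · rw [eps_odd F ho]; intro hc
    have : (n : F) = 1 := by linear_combination -hc/2
    exact hn1 (by exact_mod_cast this)

lemma down2 {n : ℤ} (hn1 : n ≠ 0) (hn2 : n ≠ -1) (h : Ub F n ∈ I) : Ub F (n-2) ∈ I := by
  refine Ub_step hI 0 (-1) _ (by ring) h ?_
  rw [Ddet_eq, eps_zero, eps_neg_one]; push_cast
  rcases Int.even_or_odd n with he | ho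
  · rw [eps_even F he]; intro hc
    have : (n : F) = 0 := by linear_combination hc/2
    exact hn1 (by exact_mod_cast this)
  · rw [eps_odd F ho]; intro hc
    have : (n : F) = -1 := by linear_combination hc/2
    exact hn2 (by exact_mod_cast this)

lemma up_any {n : ℤ} (h : Ub F n ∈ I) : Ub F (n+1) ∈ I := by
  rcases Int.even_or_odd n with he | ho
  · by_cases h4 : n = -4
    · subst h4
      have h1 : Ub F (-5 : ℤ) ∈ I := by
        have := down_even hI he h; norm_num at this ⊢; exact this
      have := up2 hI (by norm_num) (by norm_num) h1
      norm_num at this ⊢; exact this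
    · have h1 := up3_even hI he h
      have h2 := down2 hI (by rcases he with ⟨k, rfl⟩; omega) (by rcases he with ⟨k, rfl⟩; omega) h1
      have e : n + 3 - 2 = n + 1 := by ring
      rwa [e] at h2
  · exact up_odd hI ho h

lemma down_any {n : ℤ} (h : Ub F n ∈ I) : Ub F (n-1) ∈ I := by
  rcases Int.even_or_odd n with he | ho
  · exact down_even hI he h
  · by_cases h1 : n = -1
    · subst h1
      have h2 : Ub F (-4 : ℤ) ∈ I := by
        have := down3_odd hI ho h; norm_num at this ⊢; exact this
      have := up2 hI (by norm_num) (by norm_num) h2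
      norm_num at this ⊢; exact this
    · have h2 := up_odd hI ho h
      have h3 := down2 hI (by rcases ho with ⟨k, rfl⟩; omega) (by rcases ho with ⟨k, rfl⟩; omega) h2
      have e : n + 1 - 2 = n - 1 := by ring
      rwa [e] at h3

lemma reach {m : ℤ} (h : Ub F m ∈ I) : ∀ n : ℤ, Ub F n ∈ I := by
  intro n
  rcases le_or_gt m n with hle | hlt
  · exact Int.le_induction (motive := fun k _ => Ub F k ∈ I) h (fun k _ hk => up_any hI hk) n hle
  · refine Int.le_induction_down (motive := fun k _ => Ub F k ∈ I) h (fun k _ hk => ?_) n hlt.le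
    have := down_any hI hk
    rwa [sub_eq_add_neg] at this

lemma evenize (x : U F) (hx : x ∈ I) (hne : x ≠ 0) :
    ∃ y ∈ I, y ≠ 0 ∧ ∀ n ∈ y.support, Even n := by
  by_cases hodd : ∀ n : ℤ, Odd n → x n = 0
  · refine ⟨x, hx, hne, fun n hn => ?_⟩
    rcases Int.even_or_odd n with he | ho
    · exact he
    · exact absurd (hodd n ho) (Finsupp.mem_support_iff.mp hn)
  · push_neg at hodd
    obtain ⟨n, hn, hxn⟩ := hodd
    refine ⟨br F x (Ub F 0) (Ub F 2), hI _ hx _ _, ?_, ?_⟩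
    · intro h0
      have hc := br_coeff F x 0 2 (n+1)
      have e : n + 1 - 0 - 2 + 1 = n := by ring
      rw [h0, e, Ddet02 F, eps_odd F hn] at hc
      simp only [Finsupp.coe_zero, Pi.zero_apply] at hc
      norm_num at hc
      exact hxn hc
    · intro k hk
      rcases Int.even_or_odd k with he | ho
      · exact he
      exfalso
      have hc := br_coeff F x 0 2 k
      have e : k - 0 - 2 + 1 = k - 1 := by ring
      have hke : Even (k - 1) := by rcases ho with ⟨j, rfl⟩; exact ⟨j, by ring⟩
      rw [e, Ddet02 F, eps_even F hke] at hc
      norm_num at hc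
      exact (Finsupp.mem_support_iff.mp hk) hc

lemma shrink : ∀ (N : ℕ) (x : U F), x ∈ I → x ≠ 0 → (∀ n ∈ x.support, Even n) →
    x.support.card ≤ N → ∃ m : ℤ, Ub F m ∈ I := by
  intro N
  induction N with
  | zero =>
    intro x _ hne _ hcard
    exact absurd (Finsupp.support_eq_empty.mp (Finset.card_eq_zero.mp (Nat.le_zero.mp hcard))) hne
  | succ N ih =>
    intro x hx hne heven hcard
    by_cases h1 : x.support.card = 1
    · obtain ⟨a, ha, hxa⟩ := Finsupp.card_support_eq_one.mp h1
      refine ⟨a, ?_⟩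
      have hub : Ub F a = (x a)⁻¹ • x := by
        conv_rhs => rw [hxa]
        unfold Ub
        rw [Finsupp.single_eq_same, Finsupp.smul_single, smul_eq_mul, inv_mul_cancel₀ ha]
      rw [hub]; exact I.smul_mem _ hx
    · obtain ⟨n0, hn0⟩ := Finsupp.support_nonempty_iff.mpr hne
      set y : U F := br F x (Ub F 0) (Ub F 1) - ((2*n0 : ℤ) : F) • x with hy
      have hyI : y ∈ I := I.sub_mem (hI _ hx _ _) (I.smul_mem _ hx)
      have hcoeff : ∀ k : ℤ, y k = x k * (eps F k + 2*(k:F) - 1 - 2*(n0:F)) := by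
        intro k
        rw [hy, Finsupp.sub_apply, Finsupp.smul_apply, smul_eq_mul]
        have hc := br_coeff F x 0 1 k
        have e : k - 0 - 1 + 1 = k := by ring
        rw [e, Ddet01 F] at hc
        rw [hc]; push_cast; ring
      have hsupp : y.support = x.support.erase n0 := by
        ext k
        simp only [Finsupp.mem_support_iff, Finset.mem_erase]
        constructor
        · intro hk
          have hxk : x k ≠ 0 := fun h => hk (by rw [hcoeff k, h, zero_mul])
          refine ⟨?_, hxk⟩
          intro hkn0
          subst hkn0
          apply hk
          rw [hcoeff k, eps_even F (heven _ hn0)]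
          have hz : (1 : F) + 2*(k:F) - 1 - 2*(k:F) = 0 := by ring
          rw [hz, mul_zero]
        · rintro ⟨hkne, hxk⟩
          rw [hcoeff k, eps_even F (heven k (Finsupp.mem_support_iff.mpr hxk))]
          intro hzero
          rcases mul_eq_zero.mp hzero with h | h
          · exact hxk h
          · have hkn : (k : F) = (n0 : F) := by linear_combination h/2
            exact hkne (by exact_mod_cast hkn)
      have hne' : y ≠ 0 := by
        intro h0
        have h2 : x.support.erase n0 = ∅ := by rw [← hsupp, h0, Finsupp.support_zero]
        have h3 := Finset.card_erase_of_mem hn0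
        rw [h2, Finset.card_empty] at h3
        have h4 : 0 < x.support.card := Finset.card_pos.mpr ⟨n0, hn0⟩
        omega
      have hcard' : y.support.card ≤ N := by
        rw [hsupp, Finset.card_erase_of_mem hn0]
        omega
      exact ih y hyI hne' (fun n hn => heven n (Finset.mem_of_mem_erase (by rwa [← hsupp]))) hcard'

lemma ideal_top (hbot : I ≠ ⊥) : I = ⊤ := by
  obtain ⟨x, hxI, hxne⟩ := Submodule.exists_mem_ne_zero_of_ne_bot hbot
  obtain ⟨y, hyI, hyne, hyeven⟩ := evenize hI x hxI hxne
  obtain ⟨m, hm⟩ := shrink hI y.support.card y hyI hyne hyeven le_rfl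
  have hall := reach hI hm
  rw [eq_top_iff]
  intro z _
  have hz : z = z.sum fun n v => Finsupp.single n v := (Finsupp.sum_single z).symm
  rw [hz, Finsupp.sum]
  apply Submodule.sum_mem
  intro n _
  have hsm : Finsupp.single n (z n) = (z n) • Ub F n := by
    unfold Ub; rw [Finsupp.smul_single, smul_eq_mul, mul_one]
  rw [hsm]
  exact I.smul_mem _ (hall n)

end Ideal

/-- `(U, [·,·,·])` is the simple 3-Lie algebra `A_ω`: the bracket
satisfies the Fundamental Identity, and every nonzero subspace `I` with
`[I, U, U] ⊆ I` equals `U`. -/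
theorem simple_threeLie :
    (∀ x1 x2 x3 y2 y3 : U F,
        br F (br F x1 x2 x3) y2 y3
          = br F (br F x1 y2 y3) x2 x3 + br F x1 (br F x2 y2 y3) x3
            + br F x1 x2 (br F x3 y2 y3))
      ∧ (∀ I : Submodule F (U F),
          (∀ x ∈ I, ∀ y z : U F, br F x y z ∈ I) → I ≠ ⊥ → I = ⊤) := by
  refine ⟨FI F, ?_⟩
  intro I hI hbot
  exact ideal_top hI hbot

end Aomega
end
end
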